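/- Let ν be a finite point measure on ℝ≥0, z₀ ∈ ℝ≥0, and m ∈ ℕ. Then (ν+δ_{z₀})^{⊗m,↓} − ν^{⊗m,↓} = Σ_{i=1}^m ν^{⊗(m−1),↓} ⊗_i δ_{z₀}, where ν^{⊗m,↓} is the m-fold falling factorial (sampling without replacement) measure and ⊗_i denotes insertion of δ_{z₀} in the i-th coordinate. -/

import Mathlib

open scoped Classical
open Finset

/-!
Induct on `m`. A sample from `z₀ ::ₘ ν` either starts with `z₀`, and is then `z₀` prepended
to a sample from `ν` (insertion at position `0`), or starts with an atom `z` of `ν` followed by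
a sample from `z₀ ::ₘ ν.erase z`. By induction the tail either avoids the new atom, which gives
exactly the samples from `ν`, or carries it at some position `i`, which becomes position
`i + 1` once `z` is prepended.
-/

/-- The `m`-fold falling factorial (sampling without replacement) measure
`ν^{⊗m,↓}` of a finite point measure `ν` on `ℝ≥0`, encoded as the multiset of
ordered `m`-samples without replacement from the multiset of atoms. -/
noncomputable def factorialSample : ℕ → Multiset NNReal → Multiset (List NNReal)
  | 0, _ => {[]}
  | m + 1, s => s.bind fun z => (factorialSample m (s.erase z)).map fun l => z :: l

namespace Multiset

variable {α β ι : Type*}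

theorem bind_finset_sum (s : Multiset α) (t : Finset ι) (f : α → ι → Multiset β) :
    (s.bind fun a => ∑ i ∈ t, f a i) = ∑ i ∈ t, s.bind fun a => f a i :=
  sum_map_sum

theorem map_finset_sum (t : Finset ι) (f : ι → Multiset α) (g : α → β) :
    (∑ i ∈ t, f i).map g = ∑ i ∈ t, (f i).map g :=
  map_sum (mapAddMonoidHom g) f t

end Multiset

open Multiset

theorem factorialSample_succ (m : ℕ) (s : Multiset NNReal) :
    factorialSample (m + 1) s = s.bind fun z => (factorialSample m (s.erase z)).map (z :: ·) :=
  rfl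

theorem factorialSample_succ_cons (m : ℕ) (z₀ : NNReal) (ν : Multiset NNReal) :
    factorialSample (m + 1) (z₀ ::ₘ ν)
      = (factorialSample m ν).map (z₀ :: ·)
        + ν.bind fun z => (factorialSample m (z₀ ::ₘ ν.erase z)).map (z :: ·) := by
  rw [factorialSample_succ, cons_bind, erase_cons_head]
  congr 1
  exact bind_congr fun z hz => by rw [erase_cons_tail_of_mem hz]

theorem map_insertIdx_succ_factorialSample {m : ℕ} (hm : 0 < m) (i : ℕ) (z₀ : NNReal)
    (ν : Multiset NNReal) :
    (factorialSample m ν).map (·.insertIdx (i + 1) z₀)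
      = ν.bind fun z => (factorialSample (m - 1) (ν.erase z)).map (z :: ·.insertIdx i z₀) := by
  obtain ⟨k, rfl⟩ : ∃ k, m = k + 1 := ⟨m - 1, by omega⟩
  rw [factorialSample_succ, map_bind]
  simp only [Multiset.map_map, Function.comp_def, List.insertIdx_succ_cons, Nat.add_sub_cancel]

/-- Addition rule for factorial measures:
`(ν+δ_{z₀})^{⊗m,↓} − ν^{⊗m,↓} = Σ_{i=1}^m ν^{⊗(m−1),↓} ⊗_i δ_{z₀}`, where
`⊗_i` inserts the Dirac mass at `z₀` in the `i`-th coordinate. -/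
theorem factorialSample_add_singleton (ν : Multiset NNReal) (z₀ : NNReal) (m : ℕ) :
    factorialSample m (z₀ ::ₘ ν)
      = factorialSample m ν
        + ∑ i ∈ Finset.range m,
            (factorialSample (m - 1) ν).map (fun l => l.insertIdx i z₀) := by
  induction m generalizing ν with
  | zero => simp [factorialSample]
  | succ m ih =>
    calc factorialSample (m + 1) (z₀ ::ₘ ν)
        = (factorialSample m ν).map (z₀ :: ·)
          + ((ν.bind fun z => (factorialSample m (ν.erase z)).map (z :: ·))
            + ∑ i ∈ range m, ν.bind fun z =>
                (factorialSample (m - 1) (ν.erase z)).map (z :: ·.insertIdx i z₀)) := by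
          simp only [factorialSample_succ_cons, ih, map_add, map_finset_sum, Multiset.map_map,
            Function.comp_def, bind_add, bind_finset_sum]
      _ = (factorialSample m ν).map (·.insertIdx 0 z₀) + (factorialSample (m + 1) ν
            + ∑ i ∈ range m, (factorialSample m ν).map (·.insertIdx (i + 1) z₀)) := by
          rw [← factorialSample_succ, sum_congr rfl fun i hi =>
            (map_insertIdx_succ_factorialSample (Nat.zero_lt_of_lt (mem_range.mp hi)) i z₀ ν).symm]
          simp only [List.insertIdx_zero]
      _ = _ := by
          rw [Nat.add_sub_cancel, sum_range_succ' _ m]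
          abel
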